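/- arXiv:2307.05289 — 2 statements merged into one kernel-verified Lean document; each statement's English description precedes it below -/
import Mathlib

section
/- For any finite simple graph G with vertex set of size n and any m with 1 ≤ m ≤ n-1, the maximal number of induced edges satisfies I(m+1) - I(m) ≤ I(m) - I(m-1) + 1; equivalently, δ(i+1) - δ(i) ≤ 1 where δ(m) = I(m) - I(m-1), provided G is isoperimetric (admits a nested chain of optimal sets). -/
open Finset

noncomputable section
open scoped Classical

/-- Number of edges of `G` with both endpoints in `A`. -/
def inducedEdges {V : Type*} [Fintype V] (G : SimpleGraph V) (A : Finset V) : ℕ :=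
  (G.edgeFinset.filter (fun e => ∀ v ∈ e, v ∈ A)).card

/-- `I_G(m)`: the maximal number of induced edges over all vertex subsets of size `m`. -/
def maxInduced {V : Type*} [Fintype V] (G : SimpleGraph V) (m : ℕ) : ℕ :=
  (Finset.powersetCard m (Finset.univ : Finset V)).sup (inducedEdges G)

/-- `G` is isoperimetric: there is a nested chain of optimal sets, one of each size. -/
def Isoperimetric {V : Type*} [Fintype V] (G : SimpleGraph V) : Prop :=
  ∃ A : ℕ → Finset V,
    (∀ i ≤ Fintype.card V, (A i).card = i) ∧
    (∀ i, i < Fintype.card V → A i ⊆ A (i + 1)) ∧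
    (∀ i ≤ Fintype.card V, inducedEdges G (A i) = maxInduced G i)

lemma inducedEdges_insert {V : Type*} [Fintype V] (G : SimpleGraph V)
    (B : Finset V) (y : V) (hy : y ∉ B) :
    inducedEdges G (insert y B) = inducedEdges G B + (B.filter (G.Adj y)).card := by
  classical
  unfold inducedEdges
  have hset : (G.edgeFinset.filter (fun e => ∀ v ∈ e, v ∈ insert y B))
      = (G.edgeFinset.filter (fun e => ∀ v ∈ e, v ∈ B))
        ∪ ((B.filter (G.Adj y)).image (fun v => s(y, v))) := by
    ext e
    induction e using Sym2.ind with
    | _ a b =>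
      simp only [mem_filter, mem_union, mem_image, SimpleGraph.mem_edgeFinset,
        Sym2.mem_iff, mem_insert]
      constructor
      · rintro ⟨hab, hall⟩
        have ha := hall a (Or.inl rfl)
        have hb := hall b (Or.inr rfl)
        rcases ha with ha | ha
        · subst ha
          have hb' : b ∈ B := by
            rcases hb with hb | hb
            · exact absurd (hb ▸ hab) (G.irrefl)
            · exact hb
          exact Or.inr ⟨b, ⟨hb', hab⟩, rfl⟩
        · rcases hb with hb | hb
          · subst hb
            exact Or.inr ⟨a, ⟨ha, hab.symm⟩, Sym2.eq_swap⟩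
          · exact Or.inl ⟨hab, fun v hv => by rcases hv with h | h <;> simp [h, ha, hb]⟩
      · rintro (⟨hab, hall⟩ | ⟨v, ⟨hv, hadj⟩, he⟩)
        · exact ⟨hab, fun w hw => Or.inr (hall w hw)⟩
        · rw [Sym2.eq_iff] at he
          rcases he with ⟨h1, h2⟩ | ⟨h1, h2⟩
          · subst h1; subst h2; exact ⟨hadj, fun w hw => by rcases hw with h | h <;> simp [h, hv]⟩
          · subst h1; subst h2; exact ⟨hadj.symm, fun w hw => by rcases hw with h | h <;> simp [h, hv]⟩
  rw [hset, card_union_of_disjoint, card_image_of_injOn]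
  · intro v hv w hw hvw
    simp only [Sym2.eq_iff] at hvw
    rcases hvw with ⟨-, h⟩ | ⟨h1, h2⟩
    · exact h
    · exact absurd (h2 ▸ (mem_filter.mp hv).2) (G.loopless.irrefl y)
  · rw [disjoint_left]
    rintro e he1 he2
    obtain ⟨v, hv, rfl⟩ := mem_image.mp he2
    have := (mem_filter.mp he1).2 y (by simp)
    exact hy this

lemma inducedEdges_le_maxInduced {V : Type*} [Fintype V] (G : SimpleGraph V) (S : Finset V) :
    inducedEdges G S ≤ maxInduced G S.card :=
  Finset.le_sup (mem_powersetCard.mpr ⟨subset_univ S, rfl⟩)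

/-- δ(i+1) - δ(i) ≤ 1, stated additively:
`I(m+1) + I(m-1) ≤ 2 * I(m) + 1` for `1 ≤ m ≤ n - 1`. -/
theorem stmt_2 {V : Type*} [Fintype V] (G : SimpleGraph V)
    (hG : Isoperimetric G) (m : ℕ) (hm1 : 1 ≤ m) (hm2 : m ≤ Fintype.card V - 1) :
    maxInduced G (m + 1) + maxInduced G (m - 1) ≤ 2 * maxInduced G m + 1 := by
  classical
  obtain ⟨A, hcard, hsub, hopt⟩ := hG
  have hn1 : m + 1 ≤ Fintype.card V := by omega
  have hc1 : (A (m-1)).card = m - 1 := hcard _ (by omega)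
  have hc2 : (A m).card = m := hcard _ (by omega)
  have hc3 : (A (m+1)).card = m + 1 := hcard _ hn1
  have hsub1 : A (m-1) ⊆ A m := by
    have := hsub (m-1) (by omega)
    rwa [Nat.sub_add_cancel hm1] at this
  have hsub2 : A m ⊆ A (m+1) := hsub m (by omega)
  obtain ⟨x, hx⟩ : ∃ x, A m \ A (m-1) = {x} := by
    apply card_eq_one.mp
    rw [card_sdiff_of_subset hsub1, hc1, hc2]; omega
  have hxnot : x ∉ A (m-1) := by
    have : x ∈ A m \ A (m-1) := hx ▸ mem_singleton_self x
    exact (mem_sdiff.mp this).2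
  have hAm : A m = insert x (A (m-1)) := by
    have h := sdiff_union_of_subset hsub1
    rw [hx] at h
    rw [← h]; ext z; simp [or_comm]
  obtain ⟨y, hy⟩ : ∃ y, A (m+1) \ A m = {y} := by
    apply card_eq_one.mp
    rw [card_sdiff_of_subset hsub2, hc2, hc3]; omega
  have hynot : y ∉ A m := by
    have : y ∈ A (m+1) \ A m := hy ▸ mem_singleton_self y
    exact (mem_sdiff.mp this).2
  have hynot' : y ∉ A (m-1) := fun h => hynot (hsub1 h)
  have hAm1 : A (m+1) = insert y (A m) := by
    have h := sdiff_union_of_subset hsub2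
    rw [hy] at h
    rw [← h]; ext z; simp [or_comm]
  have h1 : inducedEdges G (A (m+1)) = inducedEdges G (A m) + ((A m).filter (G.Adj y)).card := by
    rw [hAm1]; exact inducedEdges_insert G _ y hynot
  have h2 : ((A m).filter (G.Adj y)).card ≤ ((A (m-1)).filter (G.Adj y)).card + 1 := by
    rw [hAm, filter_insert]
    split_ifs
    · exact card_insert_le _ _
    · omega
  have h3 : inducedEdges G (insert y (A (m-1)))
      = inducedEdges G (A (m-1)) + ((A (m-1)).filter (G.Adj y)).card :=
    inducedEdges_insert G _ y hynot'
  have h4 : inducedEdges G (insert y (A (m-1))) ≤ maxInduced G m := by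
    have h := inducedEdges_le_maxInduced G (insert y (A (m-1)))
    rwa [card_insert_of_notMem hynot', hc1, Nat.sub_add_cancel hm1] at h
  have e1 := hopt (m-1) (by omega)
  have e2 := hopt m (by omega)
  have e3 := hopt (m+1) hn1
  omega
end
end

section
/- For the hypercube Q_d = K_2^d (the d-fold Cartesian product of K_2), the initial segment of size 2^k (0 ≤ k ≤ d) of the lexicographic order is a k-dimensional subcube and induces exactly k·2^{k-1} edges; moreover, no subset of 2^k vertices of Q_d induces more than k·2^{k-1} edges. -/
open Finset

noncomputable section
open scoped Classical

/-- The hypercube `Q_d`: vertices are 0/1-strings of length `d`, adjacent iff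
they differ in exactly one coordinate. -/
def hypercube (d : ℕ) : SimpleGraph (Fin d → Bool) where
  Adj x y := (Finset.univ.filter (fun i => x i ≠ y i)).card = 1
  symm := by
    constructor
    intro x y h
    simpa [ne_comm] using h
  loopless := by
    constructor
    intro x h
    simp at h

lemma card_filter_cons {d : ℕ} (b c : Bool) (x y : Fin d → Bool) :
    (((Finset.univ : Finset (Fin (d+1)))).filter (fun i => (Fin.cons b x : Fin (d+1) → Bool) i ≠ (Fin.cons c y : Fin (d+1) → Bool) i)).card
      = (if b ≠ c then 1 else 0) + (((Finset.univ : Finset (Fin d))).filter (fun i => x i ≠ y i)).card := by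
  rw [Finset.card_filter, Finset.card_filter, Fin.sum_univ_succ]
  simp [Fin.cons_zero, Fin.cons_succ]

lemma adj_cons {d : ℕ} (b c : Bool) (x y : Fin d → Bool) :
    (hypercube (d+1)).Adj (Fin.cons b x) (Fin.cons c y) ↔
      ((b = c ∧ (hypercube d).Adj x y) ∨ (b ≠ c ∧ x = y)) := by
  show (Finset.univ.filter _).card = 1 ↔ _
  rw [card_filter_cons]
  show _ ↔ (b = c ∧ (((Finset.univ : Finset (Fin d))).filter (fun i => x i ≠ y i)).card = 1) ∨ _
  by_cases hbc : b = c
  · simp [hbc]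
  · simp only [if_pos hbc, hbc, true_and, false_and, false_or]
    constructor
    · intro h
      refine ⟨hbc, ?_⟩
      funext i
      have h0 : (((Finset.univ : Finset (Fin d))).filter (fun i => x i ≠ y i)).card = 0 := by omega
      rw [Finset.card_eq_zero, Finset.filter_eq_empty_iff] at h0
      have := h0 (Finset.mem_univ i)
      simpa using this
    · intro h
      obtain ⟨-, rfl⟩ := h
      simp

def flt {d : ℕ} (b : Bool) (A : Finset (Fin (d+1) → Bool)) : Finset (Fin d → Bool) :=
  Finset.univ.filter (fun z => (Fin.cons b z : Fin (d+1) → Bool) ∈ A)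

lemma mem_flt {d : ℕ} {b : Bool} {A : Finset (Fin (d+1) → Bool)} {z : Fin d → Bool} :
    z ∈ flt b A ↔ (Fin.cons b z : Fin (d+1) → Bool) ∈ A := by
  simp [flt]

lemma card_filter_head {d : ℕ} (b : Bool) (A : Finset (Fin (d+1) → Bool)) :
    (A.filter (fun x => x 0 = b)).card = (flt b A).card := by
  apply Finset.card_bij' (fun x _ => Fin.tail x) (fun z _ => (Fin.cons b z : Fin (d+1) → Bool))
  · intro x hx
    rw [Finset.mem_filter] at hx
    rw [mem_flt]
    have : (Fin.cons b (Fin.tail x) : Fin (d+1) → Bool) = x := by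
      rw [← hx.2]; exact Fin.cons_self_tail x
    rw [this]; exact hx.1
  · intro z hz
    rw [mem_flt] at hz
    rw [Finset.mem_filter]
    exact ⟨hz, by simp⟩
  · intro x hx
    rw [Finset.mem_filter] at hx
    rw [← hx.2]; exact Fin.cons_self_tail x
  · intro z hz
    simp

lemma card_split {d : ℕ} (A : Finset (Fin (d+1) → Bool)) :
    A.card = (flt false A).card + (flt true A).card := by
  rw [← card_filter_head false A, ← card_filter_head true A]
  rw [← Finset.card_filter_add_card_filter_not (s := A) (p := fun x => x 0 = false)]
  congr 2
  apply Finset.filter_congr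
  intro x _
  cases h : x 0 <;> simp [h]

/-- ordered adjacent pairs within `A` -/
def pc (d : ℕ) (A : Finset (Fin d → Bool)) : ℕ :=
  ((A ×ˢ A).filter fun p => (hypercube d).Adj p.1 p.2).card

lemma pc_same_head {d : ℕ} (b : Bool) (A : Finset (Fin (d+1) → Bool)) :
    ((((A ×ˢ A).filter fun p => (hypercube (d+1)).Adj p.1 p.2).filter
        fun p => p.1 0 = b ∧ p.2 0 = b)).card = pc d (flt b A) := by
  apply Finset.card_bij' (fun p _ => (Fin.tail p.1, Fin.tail p.2))
    (fun q _ => ((Fin.cons b q.1 : Fin (d+1) → Bool), (Fin.cons b q.2 : Fin (d+1) → Bool)))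
  · intro p hp
    simp only [Finset.mem_filter, Finset.mem_product] at hp
    obtain ⟨⟨⟨h1, h2⟩, hadj⟩, hb1, hb2⟩ := hp
    have e1 : (Fin.cons b (Fin.tail p.1) : Fin (d+1) → Bool) = p.1 := by
      rw [← hb1]; exact Fin.cons_self_tail p.1
    have e2 : (Fin.cons b (Fin.tail p.2) : Fin (d+1) → Bool) = p.2 := by
      rw [← hb2]; exact Fin.cons_self_tail p.2
    have hadj' := hadj
    rw [← e1, ← e2, adj_cons] at hadj'
    rcases hadj' with ⟨-, h⟩ | ⟨hne, -⟩
    · simp only [pc, Finset.mem_filter, Finset.mem_product, mem_flt]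
      exact ⟨⟨by rw [e1]; exact h1, by rw [e2]; exact h2⟩, h⟩
    · exact absurd rfl hne
  · intro q hq
    simp only [pc, Finset.mem_filter, Finset.mem_product, mem_flt] at hq
    obtain ⟨⟨h1, h2⟩, hadj⟩ := hq
    simp only [Finset.mem_filter, Finset.mem_product]
    refine ⟨⟨⟨h1, h2⟩, ?_⟩, by simp, by simp⟩
    rw [adj_cons]
    exact Or.inl ⟨rfl, hadj⟩
  · intro p hp
    simp only [Finset.mem_filter] at hp
    obtain ⟨-, hb1, hb2⟩ := hp
    have e1 : (Fin.cons b (Fin.tail p.1) : Fin (d+1) → Bool) = p.1 := by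
      rw [← hb1]; exact Fin.cons_self_tail p.1
    have e2 : (Fin.cons b (Fin.tail p.2) : Fin (d+1) → Bool) = p.2 := by
      rw [← hb2]; exact Fin.cons_self_tail p.2
    rw [e1, e2]
  · intro q hq
    simp

lemma pc_cross_head {d : ℕ} (b : Bool) (A : Finset (Fin (d+1) → Bool)) :
    ((((A ×ˢ A).filter fun p => (hypercube (d+1)).Adj p.1 p.2).filter
        fun p => p.1 0 = b ∧ p.2 0 = !b)).card = (flt false A ∩ flt true A).card := by
  apply Finset.card_bij' (fun p _ => Fin.tail p.1)
    (fun z _ => ((Fin.cons b z : Fin (d+1) → Bool), (Fin.cons (!b) z : Fin (d+1) → Bool)))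
  · intro p hp
    simp only [Finset.mem_filter, Finset.mem_product] at hp
    obtain ⟨⟨⟨h1, h2⟩, hadj⟩, hb1, hb2⟩ := hp
    have e1 : (Fin.cons b (Fin.tail p.1) : Fin (d+1) → Bool) = p.1 := by
      rw [← hb1]; exact Fin.cons_self_tail p.1
    have e2 : (Fin.cons (!b) (Fin.tail p.2) : Fin (d+1) → Bool) = p.2 := by
      rw [← hb2]; exact Fin.cons_self_tail p.2
    have hadj' := hadj
    rw [← e1, ← e2, adj_cons] at hadj'
    rcases hadj' with ⟨heq, -⟩ | ⟨-, heq⟩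
    · exact absurd heq (by simp)
    · rw [Finset.mem_inter, mem_flt, mem_flt]
      cases b
      · exact ⟨by rw [e1]; exact h1, by rw [heq, ← Bool.not_false, e2]; exact h2⟩
      · exact ⟨by rw [heq, ← Bool.not_true, e2]; exact h2, by rw [e1]; exact h1⟩
  · intro z hz
    rw [Finset.mem_inter, mem_flt, mem_flt] at hz
    simp only [Finset.mem_filter, Finset.mem_product]
    refine ⟨⟨⟨?_, ?_⟩, ?_⟩, by simp, by simp⟩
    · cases b
      · exact hz.1
      · exact hz.2
    · cases b
      · exact hz.2
      · exact hz.1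
    · rw [adj_cons]
      exact Or.inr ⟨by simp, rfl⟩
  · intro p hp
    simp only [Finset.mem_filter, Finset.mem_product] at hp
    obtain ⟨⟨⟨h1, h2⟩, hadj⟩, hb1, hb2⟩ := hp
    have e1 : (Fin.cons b (Fin.tail p.1) : Fin (d+1) → Bool) = p.1 := by
      rw [← hb1]; exact Fin.cons_self_tail p.1
    have e2 : (Fin.cons (!b) (Fin.tail p.2) : Fin (d+1) → Bool) = p.2 := by
      rw [← hb2]; exact Fin.cons_self_tail p.2
    have hadj' := hadj
    rw [← e1, ← e2, adj_cons] at hadj'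
    rcases hadj' with ⟨heq, -⟩ | ⟨-, heq⟩
    · exact absurd heq (by simp)
    · refine Prod.ext ?_ ?_
      · exact e1
      · rw [← e2, heq]
  · intro z hz
    simp

lemma pc_split {d : ℕ} (A : Finset (Fin (d+1) → Bool)) :
    pc (d+1) A = pc d (flt false A) + pc d (flt true A)
      + 2 * (flt false A ∩ flt true A).card := by
  have key := Finset.card_eq_sum_card_fiberwise
    (s := (A ×ˢ A).filter fun p => (hypercube (d+1)).Adj p.1 p.2)
    (t := (Finset.univ : Finset (Bool × Bool)))
    (f := fun p => (p.1 0, p.2 0)) (fun _ _ => Finset.mem_univ _)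
  rw [show pc (d+1) A = ((A ×ˢ A).filter fun p => (hypercube (d+1)).Adj p.1 p.2).card from rfl,
    key, Fintype.sum_prod_type, Fintype.sum_bool, Fintype.sum_bool, Fintype.sum_bool]
  have c1 := pc_same_head true A
  have c2 := pc_same_head false A
  have c3 := pc_cross_head true A
  have c4 := pc_cross_head false A
  simp only [Finset.filter_filter] at *
  have e1 : ∀ (b c : Bool),
      (Finset.filter (fun p => (hypercube (d+1)).Adj p.1 p.2 ∧ (p.1 0, p.2 0) = (b, c)) (A ×ˢ A))
        = (Finset.filter (fun p => (hypercube (d+1)).Adj p.1 p.2 ∧ p.1 0 = b ∧ p.2 0 = c) (A ×ˢ A)) := by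
    intro b c
    apply Finset.filter_congr
    intro p _
    rw [Prod.ext_iff]
  rw [e1, e1, e1, e1, c1, c2]
  simp only [Bool.not_true, Bool.not_false] at c3 c4
  rw [c3, c4]
  ring

lemma pairs_eq_two_mul {V : Type*} [Fintype V] (G : SimpleGraph V) (A : Finset V) :
    ((A ×ˢ A).filter fun p => G.Adj p.1 p.2).card = 2 * inducedEdges G A := by
  rw [Finset.card_eq_sum_card_fiberwise
    (t := G.edgeFinset.filter (fun e => ∀ v ∈ e, v ∈ A))
    (f := fun p : V × V => Sym2.mk p.1 p.2) ?_]
  · rw [Finset.sum_congr rfl (g := fun _ => 2) ?_, Finset.sum_const, smul_eq_mul,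
      inducedEdges, Nat.mul_comm]
    intro e he
    obtain ⟨⟨x, y⟩, rfl⟩ := Quot.exists_rep e
    simp only [Finset.mem_filter, SimpleGraph.mem_edgeFinset, SimpleGraph.mem_edgeSet] at he
    obtain ⟨hadj, hmem⟩ := he
    have hx : x ∈ A := hmem x (by simp [Sym2.mem_iff])
    have hy : y ∈ A := hmem y (by simp [Sym2.mem_iff])
    have hne : x ≠ y := G.ne_of_adj hadj
    have : ((A ×ˢ A).filter fun p => G.Adj p.1 p.2).filter
        (fun p => Sym2.mk p.1 p.2 = Sym2.mk x y) = {(x, y), (y, x)} := by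
      ext p
      simp only [Finset.mem_filter, Finset.mem_product, Finset.mem_insert,
        Finset.mem_singleton, Sym2.eq_iff]
      constructor
      · rintro ⟨-, (⟨h1, h2⟩ | ⟨h1, h2⟩)⟩
        · left; exact Prod.ext h1 h2
        · right; exact Prod.ext h1 h2
      · rintro (rfl | rfl)
        · exact ⟨⟨⟨hx, hy⟩, hadj⟩, Or.inl ⟨rfl, rfl⟩⟩
        · exact ⟨⟨⟨hy, hx⟩, G.adj_symm hadj⟩, Or.inr ⟨rfl, rfl⟩⟩
    rw [this]
    rw [Finset.card_insert_of_notMem (by simp [Prod.ext_iff, hne]), Finset.card_singleton]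
  · intro p hp
    simp only [Finset.mem_coe, Finset.mem_filter, Finset.mem_product] at hp
    obtain ⟨⟨h1, h2⟩, hadj⟩ := hp
    simp only [Finset.mem_coe, Finset.mem_filter, SimpleGraph.mem_edgeFinset, SimpleGraph.mem_edgeSet]
    refine ⟨hadj, ?_⟩
    intro v hv
    rw [Sym2.mem_iff] at hv
    rcases hv with rfl | rfl
    · exact h1
    · exact h2

lemma pc_eq {d : ℕ} (A : Finset (Fin d → Bool)) :
    pc d A = 2 * inducedEdges (hypercube d) A := pairs_eq_two_mul _ _

lemma pc_zero (A : Finset (Fin 0 → Bool)) : pc 0 A = 0 := by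
  rw [pc, Finset.card_eq_zero, Finset.filter_eq_empty_iff]
  intro p _
  show ¬ (Finset.univ.filter _).card = 1
  simp

lemma log_one_add_key {x : ℝ} (hx0 : 0 ≤ x) (hx1 : x ≤ 1) :
    x * Real.log 2 ≤ Real.log (1 + x) := by
  have h := strictConcaveOn_log_Ioi.concaveOn.2 (Set.mem_Ioi.mpr one_pos)
    (Set.mem_Ioi.mpr (by norm_num : (0:ℝ) < 2)) (by linarith : (0:ℝ) ≤ 1 - x) hx0 (by ring)
  simp only [smul_eq_mul, Real.log_one, mul_zero, mul_one, zero_add] at h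
  calc x * Real.log 2 ≤ Real.log (1 - x + x * 2) := h
    _ = Real.log (1 + x) := by ring_nf

lemma key_real {a b : ℝ} (hb : 0 ≤ b) (hab : b ≤ a) :
    a * Real.log a + b * Real.log b + 2 * b * Real.log 2 ≤ (a + b) * Real.log (a + b) := by
  rcases eq_or_lt_of_le hb with rfl | hb0
  · simp
  · have ha0 : 0 < a := lt_of_lt_of_le hb0 hab
    have hab0 : 0 < a + b := by linarith
    have h1 : b * Real.log 2 + b * Real.log b ≤ b * Real.log (a + b) := by
      have : Real.log 2 + Real.log b ≤ Real.log (a + b) := by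
        rw [← Real.log_mul (by norm_num) (ne_of_gt hb0)]
        exact Real.log_le_log (by linarith) (by linarith)
      nlinarith [this, hb0.le]
    have h2 : a * Real.log a + b * Real.log 2 ≤ a * Real.log (a + b) := by
      have hx0 : (0:ℝ) ≤ b / a := div_nonneg hb ha0.le
      have hx1 : b / a ≤ 1 := (div_le_one ha0).mpr hab
      have hk := log_one_add_key hx0 hx1
      have he : Real.log (1 + b / a) = Real.log (a + b) - Real.log a := by
        rw [show (1 : ℝ) + b / a = (a + b) / a by field_simp, Real.log_div (ne_of_gt hab0) (ne_of_gt ha0)]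
      rw [he] at hk
      have := mul_le_mul_of_nonneg_left hk ha0.le
      rw [show a * (b / a * Real.log 2) = b * Real.log 2 by field_simp] at this
      linarith
    linarith

lemma pc_bound : ∀ (d : ℕ) (A : Finset (Fin d → Bool)),
    (pc d A : ℝ) * Real.log 2 ≤ (A.card : ℝ) * Real.log (A.card) := by
  intro d
  induction d with
  | zero =>
    intro A
    rw [pc_zero]
    rcases Nat.eq_zero_or_pos A.card with h | h
    · simp [h]
    · rw [Nat.cast_zero, zero_mul]
      refine mul_nonneg (by positivity) (Real.log_nonneg ?_)
      exact_mod_cast h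
  | succ d ih =>
    intro A
    rw [pc_split, card_split]
    set a := (flt false A).card with ha
    set b := (flt true A).card with hbdef
    have hM1 : (flt false A ∩ flt true A).card ≤ a := Finset.card_le_card Finset.inter_subset_left
    have hM2 : (flt false A ∩ flt true A).card ≤ b := Finset.card_le_card Finset.inter_subset_right
    set M := (flt false A ∩ flt true A).card
    have hP := ih (flt false A)
    have hQ := ih (flt true A)
    rw [← ha] at hP
    rw [← hbdef] at hQ
    have hlog2 : (0:ℝ) ≤ Real.log 2 := Real.log_nonneg (by norm_num)
    push_cast
    rcases le_total (b : ℝ) (a : ℝ) with hc | hc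
    · have hk := key_real (a := (a:ℝ)) (b := (b:ℝ)) (by positivity) hc
      have hMb : (M : ℝ) ≤ (b : ℝ) := by exact_mod_cast hM2
      nlinarith [hP, hQ, hk, mul_le_mul_of_nonneg_right hMb hlog2]
    · have hk := key_real (a := (b:ℝ)) (b := (a:ℝ)) (by positivity) hc
      have hMa : (M : ℝ) ≤ (a : ℝ) := by exact_mod_cast hM1
      have : ((b:ℝ) + a) * Real.log ((b:ℝ) + a) = ((a:ℝ) + b) * Real.log ((a:ℝ) + b) := by
        ring_nf
      nlinarith [hP, hQ, hk, mul_le_mul_of_nonneg_right hMa hlog2]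

def seg (d k : ℕ) : Finset (Fin d → Bool) :=
  Finset.univ.filter (fun x : Fin d → Bool => ∀ i : Fin d, (i : ℕ) < d - k → x i = false)

lemma seg_self (d : ℕ) : seg d d = Finset.univ := by
  ext x
  simp only [seg, Finset.mem_filter, Finset.mem_univ, true_and, iff_true]
  intro i hi
  omega

lemma flt_false_seg {d k : ℕ} (hk : k ≤ d) : flt false (seg (d+1) k) = seg d k := by
  ext z
  rw [mem_flt]
  simp only [seg, Finset.mem_filter, Finset.mem_univ, true_and]
  constructor
  · intro h j hj
    have := h j.succ (by simp only [Fin.val_succ]; omega)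
    simpa using this
  · intro h i hi
    induction i using Fin.cases with
    | zero => simp
    | succ j =>
      rw [Fin.cons_succ]
      exact h j (by simp only [Fin.val_succ] at hi; omega)

lemma flt_true_seg {d k : ℕ} (hk : k ≤ d) : flt true (seg (d+1) k) = ∅ := by
  ext z
  rw [mem_flt]
  simp only [seg, Finset.mem_filter, Finset.mem_univ, true_and, Finset.notMem_empty, iff_false]
  intro h
  have := h 0 (by simp; omega)
  simp at this

lemma flt_univ {d : ℕ} (b : Bool) : flt b (Finset.univ : Finset (Fin (d+1) → Bool)) = Finset.univ := by
  ext z; simp [mem_flt]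

lemma card_funBool (d : ℕ) : (Finset.univ : Finset (Fin d → Bool)).card = 2 ^ d := by
  rw [Finset.card_univ]
  simp [Fintype.card_fun]

lemma seg_card : ∀ d k, k ≤ d → (seg d k).card = 2 ^ k := by
  intro d
  induction d with
  | zero =>
    intro k hk
    interval_cases k
    rw [seg_self, card_funBool]
  | succ d ih =>
    intro k hk
    rcases Nat.lt_or_ge k (d+1) with h | h
    · have hk' : k ≤ d := by omega
      rw [card_split (seg (d+1) k), flt_false_seg hk', flt_true_seg hk', ih k hk',
        Finset.card_empty]
      omega
    · have : k = d + 1 := by omega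
      subst this
      rw [seg_self, card_funBool]

lemma pc_empty (d : ℕ) : pc d (∅ : Finset (Fin d → Bool)) = 0 := by
  simp [pc]

lemma pc_univ : ∀ d, pc d (Finset.univ : Finset (Fin d → Bool)) = d * 2 ^ d := by
  intro d
  induction d with
  | zero => rw [pc_zero]; simp
  | succ d ih =>
    rw [pc_split, flt_univ, flt_univ, Finset.univ_inter, ih, Finset.card_univ]
    simp [Fintype.card_fun]
    ring

lemma pc_seg : ∀ d k, k ≤ d → pc d (seg d k) = k * 2 ^ k := by
  intro d
  induction d with
  | zero =>
    intro k hk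
    interval_cases k
    rw [pc_zero]
    simp
  | succ d ih =>
    intro k hk
    rcases Nat.lt_or_ge k (d+1) with h | h
    · have hk' : k ≤ d := by omega
      rw [pc_split, flt_false_seg hk', flt_true_seg hk', ih k hk', pc_empty,
        Finset.inter_empty, Finset.card_empty]
      omega
    · have : k = d + 1 := by omega
      subst this
      rw [seg_self, pc_univ]

lemma two_mul_eq (k : ℕ) : k * 2 ^ k = 2 * (k * 2 ^ (k - 1)) := by
  cases k with
  | zero => simp
  | succ k' => rw [Nat.succ_sub_one, pow_succ]; ring

/-- The initial segment of size `2^k` of the lexicographic order on `Q_d`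
(all vertices whose first `d - k` coordinates are `0`) is a `k`-dimensional
subcube: it has `2^k` vertices and induces exactly `k·2^(k-1)` edges; moreover
no set of `2^k` vertices induces more edges. -/
theorem stmt_18 (d k : ℕ) (hk : k ≤ d) :
    (Finset.univ.filter
        (fun x : Fin d → Bool => ∀ i : Fin d, (i : ℕ) < d - k → x i = false)).card
      = 2 ^ k ∧
    inducedEdges (hypercube d)
        (Finset.univ.filter
          (fun x : Fin d → Bool => ∀ i : Fin d, (i : ℕ) < d - k → x i = false))
      = k * 2 ^ (k - 1) ∧
    ∀ A : Finset (Fin d → Bool), A.card = 2 ^ k →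
      inducedEdges (hypercube d) A ≤ k * 2 ^ (k - 1) := by
  refine ⟨seg_card d k hk, ?_, ?_⟩
  · have h1 : pc d (seg d k) = k * 2 ^ k := pc_seg d k hk
    rw [pc_eq, two_mul_eq] at h1
    have := Nat.eq_of_mul_eq_mul_left (by norm_num : 0 < 2) h1
    exact this
  · intro A hA
    have hb := pc_bound d A
    rw [hA] at hb
    have hlog : Real.log ((2:ℕ) ^ k : ℕ) = k * Real.log 2 := by
      push_cast
      rw [Real.log_pow]
    have hlog2 : (0:ℝ) < Real.log 2 := Real.log_pos (by norm_num)
    have hle : (pc d A : ℝ) ≤ (k * 2 ^ k : ℕ) := by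
      rw [hlog] at hb
      push_cast at hb ⊢
      nlinarith [hb, hlog2]
    have hle' : pc d A ≤ k * 2 ^ k := by exact_mod_cast hle
    rw [pc_eq, two_mul_eq] at hle'
    omega
end
end
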